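/- arXiv:2301.01177 — 6 statements merged into one kernel-verified Lean document; each statement's English description precedes it below -/
import Mathlib

section
/- Let G be a finite group, χ an irreducible character of G, and H ≤ G a subgroup such that the restriction of χ to H is irreducible. Then for every coset Hg ⊆ G, Σ_{x∈Hg} |χ(x)|² = |H|. -/
open scoped Classical

noncomputable section Defs

/-- `χ` is the character of some finite-dimensional complex representation of `G`. -/
def IsChar (G : Type*) [Group G] [Fintype G] (χ : G → ℂ) : Prop :=
  ∃ (n : ℕ) (ρ : Representation ℂ G (Fin n → ℂ)),
    ∀ g : G, χ g = LinearMap.trace ℂ (Fin n → ℂ) (ρ g)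

/-- `χ` is an irreducible character of `G` (a character of norm one). -/
def IsIrrChar (G : Type*) [Group G] [Fintype G] (χ : G → ℂ) : Prop :=
  IsChar G χ ∧ ∑ g : G, χ g * (starRingEnd ℂ) (χ g) = (Fintype.card G : ℂ)

/-- `χ` is a real-valued class function. -/
def IsRealChar (G : Type*) (χ : G → ℂ) : Prop :=
  ∀ g : G, (starRingEnd ℂ) (χ g) = χ g

variable {G : Type*} [Group G] [Fintype G]

/-- extension of a function on a subgroup by zero. -/
def ext0 (H : Subgroup G) (θ : ↥H → ℂ) (g : G) : ℂ :=
  if h : g ∈ H then θ ⟨g, h⟩ else 0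

/-- the character of `G` induced from the character `θ` of the subgroup `H`. -/
def Ind (H : Subgroup G) (θ : ↥H → ℂ) (g : G) : ℂ :=
  (∑ x : G, ext0 H θ (x * g * x⁻¹)) / (Nat.card H : ℂ)

/-- the character of an intermediate subgroup `K` (with `H ≤ K`) induced from `θ` on `H`. -/
def IndTo (H K : Subgroup G) (θ : ↥H → ℂ) (k : ↥K) : ℂ :=
  (∑ x : ↥K, ext0 H θ (↑x * ↑k * (↑x)⁻¹)) / (Nat.card H : ℂ)

/-- the usual inner product of class functions on `H`. -/
def innerChar (H : Subgroup G) (φ ψ : ↥H → ℂ) : ℂ :=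
  (∑ h : ↥H, φ h * (starRingEnd ℂ) (ψ h)) / (Nat.card H : ℂ)

/-- the conjugate character `θ^g : n ↦ θ (g n g⁻¹)`. -/
def conjChar (H : Subgroup G) (θ : ↥H → ℂ) (g : G) : ↥H → ℂ :=
  fun n => ext0 H θ (g * ↑n * g⁻¹)

/-- the Frobenius–Schur indicator. -/
def FSind (H : Type*) [Group H] [Fintype H] (χ : H → ℂ) : ℂ :=
  (∑ h : H, χ (h ^ 2)) / (Fintype.card H : ℂ)

/-- the Gow indicator `ε_t(θ) = (1/|N|) ∑_{n ∈ N} θ((nt)²)`. -/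
def Gow (H : Subgroup G) (θ : ↥H → ℂ) (t : G) : ℂ :=
  (∑ n : ↥H, ext0 H θ ((↑n * t) ^ 2)) / (Nat.card H : ℂ)

end Defs

open Matrix Kronecker

lemma idem_trace_zero {m : Type*} [Fintype m] [DecidableEq m] (Q : Matrix m m ℂ)
    (hQ : Q * Q = Q) (ht : Q.trace = 0) : Q = 0 := by
  set q : (m → ℂ) →ₗ[ℂ] (m → ℂ) := Matrix.toLin' Q with hq
  have hqq : q ∘ₗ q = q := by rw [hq, ← Matrix.toLin'_mul, hQ]
  obtain ⟨p, hp⟩ := (LinearMap.isProj_iff_isIdempotentElem q).mpr hqq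
  have htr : LinearMap.trace ℂ (m → ℂ) q = Q.trace := by
    rw [hq, LinearMap.trace_eq_matrix_trace ℂ (Pi.basisFun ℂ m),
      LinearMap.toMatrix_eq_toMatrix', LinearMap.toMatrix'_toLin']
  have h0 : (Module.finrank ℂ p : ℂ) = 0 := by rw [← hp.trace, htr, ht]
  have hp0 : p = ⊥ := by
    have : Module.finrank ℂ p = 0 := by exact_mod_cast h0
    exact Submodule.finrank_eq_zero.mp this
  have hq0 : q = 0 := by
    refine LinearMap.ext fun x => ?_
    have := hp.map_mem x
    rw [hp0, Submodule.mem_bot] at this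
    simp [this]
  apply Matrix.toLin'.injective
  rw [← hq, hq0, LinearEquiv.map_zero]

/-- Gallagher's lemma: if `χ↓H` is irreducible then
`∑_{x ∈ Hg} |χ(x)|² = |H|` for every coset `Hg`. -/
theorem stmt1 {G : Type*} [Group G] [Fintype G] (H : Subgroup G) (χ : G → ℂ)
    (hχ : IsIrrChar G χ) (hres : IsIrrChar ↥H (fun h : ↥H => χ ↑h)) (g : G) :
    (∑ h : ↥H, ‖χ (↑h * g)‖ ^ 2 : ℝ) = (Nat.card H : ℝ) := by
  obtain ⟨⟨n, ρ, hρ⟩, hχ2⟩ := hχ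
  have hres2 : ∑ h : ↥H, χ ↑h * (starRingEnd ℂ) (χ ↑h) = (Fintype.card ↥H : ℂ) := hres.2
  have hHcard : (Nat.card ↥H : ℂ) = (Fintype.card ↥H : ℂ) := by rw [Nat.card_eq_fintype_card]
  have hH0 : (Nat.card ↥H : ℂ) ≠ 0 := Nat.cast_ne_zero.mpr Nat.card_pos.ne'
  have hG0 : (Fintype.card G : ℂ) ≠ 0 := Nat.cast_ne_zero.mpr Fintype.card_ne_zero
  set A : G → Matrix (Fin n) (Fin n) ℂ := fun x => LinearMap.toMatrix' (ρ x) with hA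
  have hAmul : ∀ x y : G, A (x * y) = A x * A y := fun x y => by
    simp only [hA]
    rw [_root_.map_mul ρ, LinearMap.toMatrix'_mul]
  have hAtr : ∀ x : G, (A x).trace = χ x := fun x => by
    rw [hρ x, LinearMap.trace_eq_matrix_trace ℂ (Pi.basisFun ℂ (Fin n)),
      LinearMap.toMatrix_eq_toMatrix']
  set T : G → Matrix (Fin n × Fin n) (Fin n × Fin n) ℂ :=
    fun x => (A x) ⊗ₖ ((A x).map (starRingEnd ℂ)) with hT
  have hTmul : ∀ x y : G, T (x * y) = T x * T y := fun x y => by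
    simp only [hT, hAmul, Matrix.map_mul, Matrix.mul_kronecker_mul]
  have hTtr : ∀ x : G, (T x).trace = χ x * (starRingEnd ℂ) (χ x) := fun x => by
    simp only [hT]
    rw [Matrix.trace_kronecker, hAtr]
    congr 1
    rw [← hAtr x]
    simp [Matrix.trace, Matrix.diag, map_sum]
  set SH : Matrix (Fin n × Fin n) (Fin n × Fin n) ℂ := ∑ h : ↥H, T ↑h with hSH
  set SG : Matrix (Fin n × Fin n) (Fin n × Fin n) ℂ := ∑ x : G, T x with hSG
  have hSH_right : ∀ k : ↥H, SH * T ↑k = SH := fun k => by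
    rw [hSH, Finset.sum_mul]
    exact Fintype.sum_equiv (Equiv.mulRight k) _ _ fun h => by
      simp [← hTmul]
  have hSH_left : ∀ k : ↥H, T ↑k * SH = SH := fun k => by
    rw [hSH, Finset.mul_sum]
    exact Fintype.sum_equiv (Equiv.mulLeft k) _ _ fun h => by
      simp [← hTmul]
  have hSG_right : ∀ y : G, SG * T y = SG := fun y => by
    rw [hSG, Finset.sum_mul]
    exact Fintype.sum_equiv (Equiv.mulRight y) _ _ fun x => by simp [← hTmul]
  have hSG_left : ∀ y : G, T y * SG = SG := fun y => by
    rw [hSG, Finset.mul_sum]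
    exact Fintype.sum_equiv (Equiv.mulLeft y) _ _ fun x => by simp [← hTmul]
  have hSHtr : SH.trace = (Nat.card ↥H : ℂ) := by
    rw [hSH, Matrix.trace_sum, hHcard]
    simp_rw [hTtr]
    exact hres2
  have hSGtr : SG.trace = (Fintype.card G : ℂ) := by
    rw [hSG, Matrix.trace_sum]
    simp_rw [hTtr]
    exact hχ2
  have hnsmul : ∀ (c : ℕ) (M : Matrix (Fin n × Fin n) (Fin n × Fin n) ℂ),
      c • M = (c : ℂ) • M := fun c M => (Nat.cast_smul_eq_nsmul ℂ c M).symm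
  have hSHSH : SH * SH = (Nat.card ↥H : ℂ) • SH := by
    nth_rewrite 2 [hSH]
    rw [Finset.mul_sum]
    simp_rw [hSH_right]
    rw [Finset.sum_const, Finset.card_univ, hnsmul, hHcard]
  have hSHSG : SH * SG = (Nat.card ↥H : ℂ) • SG := by
    rw [hSH, Finset.sum_mul]
    simp_rw [hSG_left]
    rw [Finset.sum_const, Finset.card_univ, hnsmul, hHcard]
  have hSGSH : SG * SH = (Nat.card ↥H : ℂ) • SG := by
    rw [hSH, Finset.mul_sum]
    simp_rw [hSG_right]
    rw [Finset.sum_const, Finset.card_univ, hnsmul, hHcard]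
  have hSGSG : SG * SG = (Fintype.card G : ℂ) • SG := by
    nth_rewrite 2 [hSG]
    rw [Finset.mul_sum]
    simp_rw [hSG_right]
    rw [Finset.sum_const, Finset.card_univ, hnsmul]
  set E : Matrix (Fin n × Fin n) (Fin n × Fin n) ℂ := (Nat.card ↥H : ℂ)⁻¹ • SH with hE
  set F : Matrix (Fin n × Fin n) (Fin n × Fin n) ℂ := (Fintype.card G : ℂ)⁻¹ • SG with hF
  have hEE : E * E = E := by
    rw [hE, Matrix.smul_mul, Matrix.mul_smul, hSHSH, smul_smul, smul_smul]
    congr 1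
    field_simp
    try ring
  have hEF : E * F = F := by
    rw [hE, hF, Matrix.smul_mul, Matrix.mul_smul, hSHSG, smul_smul, smul_smul]
    congr 1
    field_simp
    try ring
  have hFE : F * E = F := by
    rw [hE, hF, Matrix.smul_mul, Matrix.mul_smul, hSGSH, smul_smul, smul_smul]
    congr 1
    field_simp
    try ring
  have hFF : F * F = F := by
    rw [hF, Matrix.smul_mul, Matrix.mul_smul, hSGSG, smul_smul, smul_smul]
    congr 1
    field_simp
    try ring
  have hEtr : E.trace = 1 := by
    rw [hE, Matrix.trace_smul, hSHtr, smul_eq_mul, inv_mul_cancel₀ hH0]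
  have hFtr : F.trace = 1 := by
    rw [hF, Matrix.trace_smul, hSGtr, smul_eq_mul, inv_mul_cancel₀ hG0]
  have hEFeq : E = F := by
    have hq : (E - F) * (E - F) = E - F := by
      rw [sub_mul, mul_sub, mul_sub, hEE, hEF, hFE, hFF]
      abel
    have hqt : (E - F).trace = 0 := by rw [Matrix.trace_sub, hEtr, hFtr, sub_self]
    have h0 := idem_trace_zero _ hq hqt
    exact sub_eq_zero.mp h0
  have key : ∑ h : ↥H, χ (↑h * g) * (starRingEnd ℂ) (χ (↑h * g)) = (Nat.card ↥H : ℂ) := by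
    have h1 : ∑ h : ↥H, χ (↑h * g) * (starRingEnd ℂ) (χ (↑h * g)) = (SH * T g).trace := by
      rw [hSH, Finset.sum_mul, Matrix.trace_sum]
      exact Finset.sum_congr rfl fun h _ => by rw [← hTmul, hTtr]
    have h3 : (SG * T g).trace = (Fintype.card G : ℂ) := by
      rw [hSG, Finset.sum_mul, Matrix.trace_sum]
      calc ∑ x : G, (T x * T g).trace = ∑ x : G, (T (x * g)).trace := by simp_rw [hTmul]
        _ = ∑ y : G, (T y).trace := Fintype.sum_equiv (Equiv.mulRight g) _ _ fun x => by simp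
        _ = (Fintype.card G : ℂ) := by simp_rw [hTtr]; exact hχ2
    have h2 : SH * T g = (Nat.card ↥H : ℂ) • (F * T g) := by
      rw [← hEFeq, hE, Matrix.smul_mul, smul_smul, mul_inv_cancel₀ hH0, one_smul]
    rw [h1, h2, Matrix.trace_smul, hF, Matrix.smul_mul, Matrix.trace_smul, h3,
      smul_eq_mul, smul_eq_mul, inv_mul_cancel₀ hG0, mul_one]
  have final : ((∑ h : ↥H, ‖χ (↑h * g)‖ ^ 2 : ℝ) : ℂ) = ((Nat.card ↥H : ℝ) : ℂ) := by
    push_cast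
    rw [← key]
    refine Finset.sum_congr rfl fun h _ => ?_
    rw [← Complex.ofReal_pow, Complex.sq_norm, ← Complex.mul_conj]
  exact_mod_cast final
end

section
/- Let G be a finite group. Then Σ_{x,y∈G} x y⁻¹ x y = Σ_K |C_G(g_K)| (K⁺)², where the sum on the right runs over the conjugacy classes K of G, g_K is a representative of K, and K⁺ denotes the sum of the elements of K in the group algebra ℂG. -/
/-!
Write `x y⁻¹ x y = x · (y⁻¹ x y)`. As `y` runs over `G`, the conjugate `y⁻¹ x y` runs over the
class of `x`, hitting each element `|C_G(x)|` times (orbit–stabilizer for the conjugation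
action), so the inner sum is `|C_G(x)| · x · K⁺`. Since `|C_G(x)|` only depends on the class `K`
of `x`, summing over `x ∈ K` gives `|C_G(g_K)| · K⁺ · K⁺`.
-/

open scoped Classical

open Finset

namespace MulAction

variable {G X : Type*} [Group G] [MulAction G X]

theorem nat_card_stabilizer_eq_of_mem_orbit {x y : X} (h : y ∈ orbit G x) :
    Nat.card (stabilizer G y) = Nat.card (stabilizer G x) := by
  obtain ⟨g, rfl⟩ := h
  exact Nat.card_congr (stabilizerEquivStabilizer rfl).toEquiv.symm

variable [Fintype G]

theorem card_fiber_smul_eq_nat_card_stabilizer (x : X) (h : G) :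
    #{g : G | g • x = h • x} = Nat.card (stabilizer G x) := by
  rw [← Fintype.card_subtype, ← Nat.card_eq_fintype_card]
  exact Nat.card_congr <| (Equiv.mulLeft h⁻¹).subtypeEquiv fun g => by
    simp [mem_stabilizer_iff, mul_smul, inv_smul_eq_iff]

theorem sum_smul_eq_card_stabilizer_nsmul {M : Type*} [AddCommMonoid M] (f : X → M) (x : X)
    [Fintype (orbit G x)] :
    ∑ g : G, f (g • x) = Nat.card (stabilizer G x) • ∑ y ∈ (orbit G x).toFinset, f y := by
  rw [← sum_fiberwise_of_maps_to (t := (orbit G x).toFinset) (g := (· • x))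
    (fun g _ => by simp), smul_sum]
  refine sum_congr rfl fun y hy => ?_
  obtain ⟨h, rfl⟩ := mem_orbit_iff.mp (Set.mem_toFinset.mp hy)
  rw [sum_congr rfl fun g hg => congrArg f (mem_filter.mp hg).2, sum_const,
    card_fiber_smul_eq_nat_card_stabilizer]

end MulAction

section ConjClasses

variable {G : Type*} [Group G]

open MulAction ConjAct in
theorem Subgroup.nat_card_centralizer_eq_of_isConj {a b : G} (h : IsConj a b) :
    Nat.card (Subgroup.centralizer {a}) = Nat.card (Subgroup.centralizer {b}) := by
  simp only [Subgroup.nat_card_centralizer_nat_card_stabilizer]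
  exact nat_card_stabilizer_eq_of_mem_orbit (mem_orbit_conjAct.mpr h)

variable [Fintype G]

open MulAction ConjAct in
theorem sum_conj_eq_card_centralizer_nsmul {M : Type*} [AddCommMonoid M] (f : G → M) (x : G) :
    ∑ y : G, f (y * x * y⁻¹) =
      Nat.card (Subgroup.centralizer {x}) • ∑ g ∈ (ConjClasses.mk x).carrier.toFinset, f g := by
  rw [Subgroup.nat_card_centralizer_nat_card_stabilizer,
    Fintype.sum_equiv toConjAct.toEquiv _ (fun c : ConjAct G => f (c • x))
      fun y => by simp [ConjAct.smul_def], sum_smul_eq_card_stabilizer_nsmul]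
  simp_rw [orbit_eq_carrier_conjClasses]

theorem ConjClasses.sum_univ_eq_sum_sum_carrier {M : Type*} [AddCommMonoid M] (f : G → M) :
    ∑ g : G, f g = ∑ c : ConjClasses G, ∑ g ∈ c.carrier.toFinset, f g := by
  rw [← sum_fiberwise univ ConjClasses.mk]
  refine sum_congr rfl fun c _ => sum_congr ?_ fun _ _ => rfl
  ext g
  simp [ConjClasses.mem_carrier_iff_mk_eq]

end ConjClasses

namespace MonoidAlgebra

variable (k : Type*) {G : Type*} [Semiring k] [Group G] [Fintype G]

noncomputable def classSum (c : ConjClasses G) : MonoidAlgebra k G :=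
  ∑ g ∈ c.carrier.toFinset, single g 1

theorem sum_single_conj (x : G) :
    ∑ y : G, single (y * x * y⁻¹) (1 : k) =
      Nat.card (Subgroup.centralizer {x}) • classSum k (ConjClasses.mk x) :=
  sum_conj_eq_card_centralizer_nsmul (fun g => single g (1 : k)) x

theorem sum_single_mul_inv_mul_mul (x : G) :
    ∑ y : G, single (x * y⁻¹ * x * y) (1 : k) =
      Nat.card (Subgroup.centralizer {x}) • (single x 1 * classSum k (ConjClasses.mk x)) := by
  rw [← mul_smul_comm, ← sum_single_conj, mul_sum, ← Equiv.sum_comp (Equiv.inv G)]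
  refine sum_congr rfl fun y _ => ?_
  rw [single_mul_single, one_mul, Equiv.inv_apply, inv_inv, mul_assoc x, mul_assoc x]

theorem sum_sum_single_mul_inv_mul_mul (rep : ConjClasses G → G)
    (hrep : ∀ c, ConjClasses.mk (rep c) = c) :
    ∑ x : G, ∑ y : G, single (x * y⁻¹ * x * y) (1 : k) =
      ∑ c : ConjClasses G, Nat.card (Subgroup.centralizer {rep c}) • classSum k c ^ 2 := by
  simp_rw [sum_single_mul_inv_mul_mul]
  rw [ConjClasses.sum_univ_eq_sum_sum_carrier]
  refine sum_congr rfl fun c _ => ?_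
  have hmk : ∀ x ∈ c.carrier.toFinset, ConjClasses.mk x = c := fun x hx =>
    ConjClasses.mem_carrier_iff_mk_eq.mp (Set.mem_toFinset.mp hx)
  calc ∑ x ∈ c.carrier.toFinset,
        Nat.card (Subgroup.centralizer {x}) • (single x 1 * classSum k (ConjClasses.mk x))
      = ∑ x ∈ c.carrier.toFinset,
          Nat.card (Subgroup.centralizer {rep c}) • (single x 1 * classSum k c) := by
        refine sum_congr rfl fun x hx => ?_
        rw [hmk x hx, Subgroup.nat_card_centralizer_eq_of_isConj
          (ConjClasses.mk_eq_mk_iff_isConj.mp ((hmk x hx).trans (hrep c).symm))]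
    _ = Nat.card (Subgroup.centralizer {rep c}) • classSum k c ^ 2 := by
        rw [← smul_sum, ← sum_mul, sq, classSum]

end MonoidAlgebra

/-- `∑_{x,y} x y⁻¹ x y = ∑_K |C_G(g_K)| (K⁺)²` in `ℂG`. -/
theorem stmt3 {G : Type*} [Group G] [Fintype G]
    (rep : ConjClasses G → G) (hrep : ∀ c, ConjClasses.mk (rep c) = c) :
    ∑ x : G, ∑ y : G, (MonoidAlgebra.single (x * y⁻¹ * x * y) (1 : ℂ) : MonoidAlgebra ℂ G) =
      ∑ c : ConjClasses G,
        (Nat.card (Subgroup.centralizer ({rep c} : Set G)) : ℂ) •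
          (∑ k ∈ c.carrier.toFinset, (MonoidAlgebra.single k (1 : ℂ) : MonoidAlgebra ℂ G)) ^ 2 := by
  simp_rw [Nat.cast_smul_eq_nsmul]
  exact MonoidAlgebra.sum_sum_single_mul_inv_mul_mul ℂ rep hrep
end

section
/- Let G be a finite group. Then Σ_{x,y∈G} [x,y] = Σ_K (|G|/|K|) (K°)⁺ K⁺ in the group algebra ℂG, where the sum runs over conjugacy classes K of G and K° denotes the conjugacy class consisting of the inverses of elements of K. -/
open scoped Classical

/-!
For fixed `x`, the map `y ↦ y⁻¹ x y` sends `G` onto the conjugacy class `K` of `x`, and each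
fibre is a coset of the centralizer of `x`, of size `|G| / |K|` by orbit–stabilizer. Hence
`∑_y [x, y] = ∑_y x⁻¹ (y⁻¹ x y) = (|G| / |K|) x⁻¹ K⁺`, and summing over `x ∈ K` gives
`(|G| / |K|) (K°)⁺ K⁺`.
-/

namespace MulAction

variable {G α : Type*} [Group G] [MulAction G α]

theorem orbitProdStabilizerEquivGroup_smul (a : α) (p : orbit G a × stabilizer G a) :
    orbitProdStabilizerEquivGroup G a p • a = p.1 := by
  change (((orbitProdStabilizerEquivGroup G a).symm _).1 : α) = _
  rw [Equiv.symm_apply_apply]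

variable [Fintype G] {M : Type*} [AddCommMonoid M]

theorem sum_smul_eq_card_stabilizer_nsmul_s4 (a : α) [Fintype (orbit G a)] (f : α → M) :
    ∑ g : G, f (g • a) = Fintype.card (stabilizer G a) • ∑ b : orbit G a, f b := by
  rw [← (orbitProdStabilizerEquivGroup G a).sum_comp, Fintype.sum_prod_type_right]
  simp only [orbitProdStabilizerEquivGroup_smul, Finset.sum_const, Finset.card_univ]

theorem sum_smul_eq_card_div_card_orbit_smul {k : Type*} [DivisionRing k] [CharZero k]
    [Module k M] (a : α) [Fintype (orbit G a)] (f : α → M) :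
    ∑ g : G, f (g • a) =
      ((Fintype.card G : k) / (orbit G a).toFinset.card) • ∑ b ∈ (orbit G a).toFinset, f b := by
  have horbit : (Fintype.card (orbit G a) : k) ≠ 0 := by
    exact_mod_cast (Fintype.card_pos_iff.2 ⟨(⟨a, mem_orbit_self a⟩ : orbit G a)⟩).ne'
  rw [sum_smul_eq_card_stabilizer_nsmul_s4, ← card_orbit_mul_card_stabilizer_eq_card_group G a,
    mul_comm, Nat.cast_mul, Set.toFinset_card, mul_div_cancel_right₀ _ horbit,
    Nat.cast_smul_eq_nsmul, Finset.sum_set_coe]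

end MulAction

theorem ConjClasses.sum_conj_eq_card_div_smul_sum {G : Type*} [Group G] [Fintype G]
    {k M : Type*} [DivisionRing k] [CharZero k] [AddCommMonoid M] [Module k M]
    (x : G) (f : G → M) :
    ∑ y : G, f (y⁻¹ * x * y) =
      ((Fintype.card G : k) / (ConjClasses.mk x).carrier.toFinset.card) •
        ∑ b ∈ (ConjClasses.mk x).carrier.toFinset, f b := by
  have hconj : ∀ y : G, y⁻¹ * x * y = ConjAct.toConjAct y⁻¹ • x := by
    intro y; simp [ConjAct.smul_def]
  rw [Fintype.sum_congr _ _ (fun y => congrArg f (hconj y)),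
    Fintype.sum_equiv ((Equiv.inv G).trans ConjAct.toConjAct.toEquiv)
      (fun y => f (ConjAct.toConjAct y⁻¹ • x)) (fun c => f (c • x)) (fun _ => rfl),
    MulAction.sum_smul_eq_card_div_card_orbit_smul (k := k), ConjAct.card,
    Set.toFinset_congr (ConjAct.orbit_eq_carrier_conjClasses x)]

theorem ConjClasses.sum_eq_sum_sum_carrier {G M : Type*} [Group G] [Fintype G] [AddCommMonoid M]
    (f : G → M) : ∑ x : G, f x = ∑ c : ConjClasses G, ∑ x ∈ c.carrier.toFinset, f x := by
  rw [← Finset.sum_fiberwise Finset.univ ConjClasses.mk f]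
  congr! 2 with c
  ext x
  simp [ConjClasses.mem_carrier_iff_mk_eq]

/-- `∑_{x,y} [x,y] = ∑_K (|G|/|K|) (K°)⁺ K⁺` in `ℂG`. -/
theorem stmt4 {G : Type*} [Group G] [Fintype G] :
    ∑ x : G, ∑ y : G, (MonoidAlgebra.single (x⁻¹ * y⁻¹ * x * y) (1 : ℂ) : MonoidAlgebra ℂ G) =
      ∑ c : ConjClasses G,
        ((Fintype.card G : ℂ) / (c.carrier.toFinset.card : ℂ)) •
          ((∑ k ∈ c.carrier.toFinset, (MonoidAlgebra.single k⁻¹ (1 : ℂ) : MonoidAlgebra ℂ G)) *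
            ∑ k ∈ c.carrier.toFinset, (MonoidAlgebra.single k (1 : ℂ) : MonoidAlgebra ℂ G)) := by
  rw [ConjClasses.sum_eq_sum_sum_carrier]
  refine Finset.sum_congr rfl fun c _ => ?_
  simp only [Finset.sum_mul_sum, MonoidAlgebra.single_mul_single, one_mul, Finset.smul_sum]
  refine Finset.sum_congr rfl fun x hx => ?_
  obtain rfl : ConjClasses.mk x = c := ConjClasses.mem_carrier_iff_mk_eq.1 (Set.mem_toFinset.1 hx)
  rw [← Finset.smul_sum, ← ConjClasses.sum_conj_eq_card_div_smul_sum x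
    (fun b => MonoidAlgebra.single (x⁻¹ * b) (1 : ℂ))]
  simp only [mul_assoc]
end

section
/- Let N ⊴ G with θ ∈ Irr(N) real-valued and G-invariant. Then ε(θ↑^G) = Σ_{t̄ ∈ Ω(G/N)} ε_t(θ), where the sum runs over involutions t̄ of G/N (including the identity), t ∈ G is any preimage of t̄, and ε_t(θ) := (1/|N|) Σ_{n∈N} θ((nt)²) is the Gow indicator. -/
open scoped Classical

/-- for `θ ∈ Irr(N)` real and `G`-invariant,
`ε(θ↑G) = ∑_{t̄ ∈ Ω(G/N)} ε_t(θ)`, the sum over involutions of `G/N` of Gow indicators. -/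
theorem stmt10 {G : Type*} [Group G] [Fintype G] (N : Subgroup G) [N.Normal]
    (θ : ↥N → ℂ) (hθ : IsIrrChar ↥N θ) (hreal : IsRealChar ↥N θ)
    (hinv : ∀ g : G, conjChar N θ g = θ)
    (rep : G ⧸ N → G) (hrep : ∀ t : G ⧸ N, (QuotientGroup.mk (rep t) : G ⧸ N) = t) :
    FSind G (Ind N θ) =
      ∑ t ∈ Finset.univ.filter (fun t : G ⧸ N => t ^ 2 = 1), Gow N θ (rep t) := by
  classical
  have hG : ((Fintype.card G : ℂ)) ≠ 0 := Nat.cast_ne_zero.2 Fintype.card_ne_zero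
  have hN : ((Nat.card ↥N : ℂ)) ≠ 0 := Nat.cast_ne_zero.2 Nat.card_pos.ne'
  -- conjugation reindexing
  have conjsum : ∀ x : G, (∑ h : G, ext0 N θ (x * h ^ 2 * x⁻¹)) = ∑ g : G, ext0 N θ (g ^ 2) := by
    intro x
    refine Fintype.sum_bijective (fun h => x * h * x⁻¹)
      ((Equiv.mulLeft x).trans (Equiv.mulRight x⁻¹)).bijective _ _ (fun h => ?_)
    congr 1
    simp [pow_two, mul_assoc]
  -- LHS
  have lhs_eq : FSind G (Ind N θ) = (∑ g : G, ext0 N θ (g ^ 2)) / (Nat.card ↥N : ℂ) := by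
    unfold FSind Ind
    rw [← Finset.sum_div, Finset.sum_comm]
    have : (∑ x : G, ∑ h : G, ext0 N θ (x * h ^ 2 * x⁻¹))
        = (Fintype.card G : ℂ) * ∑ g : G, ext0 N θ (g ^ 2) := by
      rw [Finset.sum_congr rfl (fun x _ => conjsum x)]
      simp [Finset.sum_const, Finset.card_univ, mul_comm]
    rw [this]
    field_simp
  -- bijection (G⧸N) × N ≃ G
  have hbij : Function.Bijective (fun p : (G ⧸ N) × ↥N => (↑p.2 : G) * rep p.1) := by
    rw [Fintype.bijective_iff_injective_and_card]
    constructor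
    · rintro ⟨t, n⟩ ⟨s, m⟩ h
      simp only at h
      have ht : t = s := by
        have h2 := congrArg (QuotientGroup.mk (s := N)) h
        simpa [QuotientGroup.mk_mul, hrep, (QuotientGroup.eq_one_iff (n : G)).2 n.2,
          (QuotientGroup.eq_one_iff (m : G)).2 m.2] using h2
      subst ht
      have hn : (n : G) = (m : G) := mul_right_cancel h
      simp [Prod.ext_iff, Subtype.ext hn]
    · rw [Fintype.card_prod]
      have := Subgroup.card_eq_card_quotient_mul_card_subgroup N
      simpa [Nat.card_eq_fintype_card] using this.symm
  -- cosets with t^2 ≠ 1 vanish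
  have hvanish : ∀ t ∈ (Finset.univ : Finset (G ⧸ N)),
      (∑ n : ↥N, ext0 N θ ((↑n * rep t) ^ 2)) ≠ 0 → t ^ 2 = 1 := by
    intro t _ hne
    by_contra ht
    apply hne
    refine Finset.sum_eq_zero (fun n _ => ?_)
    have hmem : ((↑n : G) * rep t) ^ 2 ∉ N := by
      intro hm
      apply ht
      have := (QuotientGroup.eq_one_iff (((↑n : G) * rep t) ^ 2)).2 hm
      simpa [QuotientGroup.mk_pow, QuotientGroup.mk_mul, hrep,
        (QuotientGroup.eq_one_iff (n : G)).2 n.2] using this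
    simp [ext0, hmem]
  -- RHS
  have rhs_eq : (∑ t ∈ Finset.univ.filter (fun t : G ⧸ N => t ^ 2 = 1), Gow N θ (rep t))
      = (∑ g : G, ext0 N θ (g ^ 2)) / (Nat.card ↥N : ℂ) := by
    unfold Gow
    rw [← Finset.sum_div]
    congr 1
    rw [Finset.sum_filter_of_ne hvanish]
    calc (∑ t : G ⧸ N, ∑ n : ↥N, ext0 N θ (((↑n : G) * rep t) ^ 2))
        = ∑ p : (G ⧸ N) × ↥N, ext0 N θ (((↑p.2 : G) * rep p.1) ^ 2) :=
          (Fintype.sum_prod_type (f := fun p : (G ⧸ N) × ↥N =>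
            ext0 N θ (((↑p.2 : G) * rep p.1) ^ 2))).symm
      _ = ∑ g : G, ext0 N θ (g ^ 2) :=
          Fintype.sum_bijective _ hbij _ _ (fun p => rfl)
  rw [lhs_eq, rhs_eq]
end

section
/- Let N ⊴ G, θ ∈ Irr(N), and t ∈ G with t² ∈ N and t ∉ N. Then ε_t(θ) = ε(θ↑^{N⟨t⟩}) − ε(θ), where ε_t(θ) := (1/|N|) Σ_{n∈N} θ((nt)²) and ε denotes the Frobenius–Schur indicator. -/
open scoped Classical

lemma ext0_coe {G : Type*} [Group G] [Fintype G] (H : Subgroup G) (θ : ↥H → ℂ) (h : ↥H) :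
    ext0 H θ ↑h = θ h := by
  simp [ext0]

/-- for `t ∈ Ω(G,N) \ N`, `ε_t(θ) = ε(θ↑^{N⟨t⟩}) − ε(θ)`. -/
theorem stmt11 {G : Type*} [Group G] [Fintype G] (N : Subgroup G) [N.Normal]
    (θ : ↥N → ℂ) (hθ : IsIrrChar ↥N θ) (t : G) (ht2 : t ^ 2 ∈ N) (htn : t ∉ N) :
    Gow N θ t =
      FSind ↥(N ⊔ Subgroup.zpowers t) (IndTo N (N ⊔ Subgroup.zpowers t) θ) - FSind ↥N θ := by
  classical
  set M := N ⊔ Subgroup.zpowers t with hM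
  have htM : t ∈ M := Subgroup.mem_sup_right (Subgroup.mem_zpowers t)
  have hNM : N ≤ M := le_sup_left
  -- every element of M is n or n*t with n ∈ N
  have hchar : ∀ g ∈ M, g ∈ N ∨ ∃ n ∈ N, g = n * t := by
    intro g hg
    rw [hM, ← SetLike.mem_coe, Subgroup.normal_mul, Set.mem_mul] at hg
    obtain ⟨n, hn, z, hz, rfl⟩ := hg
    rw [SetLike.mem_coe, Subgroup.mem_zpowers_iff] at hz
    obtain ⟨k, rfl⟩ := hz
    rcases Int.even_or_odd k with ⟨q, hq⟩ | ⟨q, hq⟩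
    · left
      have h1 : t ^ k = (t ^ 2) ^ q := by
        rw [hq]
        rw [← zpow_natCast t 2, ← zpow_mul]
        ring_nf
      exact mul_mem hn (by rw [h1]; exact Subgroup.zpow_mem N ht2 q)
    · right
      refine ⟨n * (t ^ 2) ^ q, mul_mem hn (Subgroup.zpow_mem N ht2 q), ?_⟩
      have h1 : t ^ k = (t ^ 2) ^ q * t := by
        rw [hq, zpow_add, zpow_one]
        rw [← zpow_natCast t 2, ← zpow_mul]
        ring_nf
      rw [h1, mul_assoc]
  -- the bijection (N × Bool) ≃ M
  have hnt : ∀ n : ↥N, (n : G) * t ∈ M := fun n => mul_mem (hNM n.2) htM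
  set e : ↥N × Bool → ↥M := fun p =>
    if p.2 then ⟨(p.1 : G) * t, hnt p.1⟩ else ⟨(p.1 : G), hNM p.1.2⟩ with he
  have hebij : Function.Bijective e := by
    constructor
    · rintro ⟨n, b⟩ ⟨n', b'⟩ hmm
      cases b <;> cases b' <;> simp only [he, if_true, if_false, Bool.false_eq_true,
        Subtype.mk.injEq] at hmm
      · exact Prod.ext (Subtype.ext hmm) rfl
      · exact absurd (by rw [← hmm]; exact mul_mem (inv_mem n'.2) n.2 :
          (n' : G)⁻¹ * ((n' : G) * t) ∈ N) (by simpa using htn)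
      · exact absurd (by rw [hmm]; exact mul_mem (inv_mem n.2) n'.2 :
          (n : G)⁻¹ * ((n : G) * t) ∈ N) (by simpa using htn)
      · exact Prod.ext (Subtype.ext (mul_right_cancel hmm)) rfl
    · rintro ⟨g, hg⟩
      rcases hchar g hg with h | ⟨n, hn, rfl⟩
      · exact ⟨(⟨g, h⟩, false), rfl⟩
      · exact ⟨(⟨n, hn⟩, true), rfl⟩
  have hcard : (Fintype.card ↥M : ℂ) ≠ 0 := by
    exact_mod_cast Fintype.card_ne_zero
  have hcN : (Nat.card ↥N : ℂ) ≠ 0 := by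
    rw [Nat.card_eq_fintype_card]
    exact_mod_cast Fintype.card_ne_zero
  -- the key sum S
  set S : ℂ := ∑ m : ↥M, ext0 N θ ((m : G) ^ 2) with hS
  -- split S
  have hsplit : S = (∑ n : ↥N, θ (n ^ 2)) + ∑ n : ↥N, ext0 N θ (((n : G) * t) ^ 2) := by
    rw [hS, ← Fintype.sum_bijective e hebij
      (fun p => ext0 N θ (((e p : ↥M) : G) ^ 2)) _ (fun p => rfl)]
    rw [Fintype.sum_prod_type_right, Fintype.sum_bool, add_comm]
    have hef : ∀ n : ↥N, ((e (n, false) : ↥M) : G) = (n : G) := by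
      intro n; simp [he]
    have het : ∀ n : ↥N, ((e (n, true) : ↥M) : G) = (n : G) * t := by
      intro n; simp [he]
    congr 1
    apply Finset.sum_congr rfl
    intro n _
    rw [hef n]
    rw [show ((n : G)) ^ 2 = ((n ^ 2 : ↥N) : G) by push_cast; ring, ext0_coe]
  -- conjugation invariance: FSind of induced = S / |N|
  have hFS : FSind ↥M (IndTo N M θ) = S / (Nat.card ↥N : ℂ) := by
    have hconj : ∀ x : ↥M, (∑ m : ↥M, ext0 N θ ((x : G) * ((m ^ 2 : ↥M) : G) * (x : G)⁻¹)) = S := by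
      intro x
      rw [hS, ← Equiv.sum_comp (MulAut.conj x).toEquiv (fun m : ↥M => ext0 N θ ((m : G) ^ 2))]
      apply Finset.sum_congr rfl
      intro m _
      have h2 : (((MulAut.conj x).toEquiv m : ↥M) : G) = (x : G) * (m : G) * (x : G)⁻¹ := rfl
      rw [h2, conj_pow]
      push_cast
      ring_nf
    unfold FSind IndTo
    rw [show (∑ h : ↥M, (∑ x : ↥M, ext0 N θ ((x : G) * ((h ^ 2 : ↥M) : G) * (x : G)⁻¹))
        / (Nat.card ↥N : ℂ)) = (∑ h : ↥M, ∑ x : ↥M, ext0 N θ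
        ((x : G) * ((h ^ 2 : ↥M) : G) * (x : G)⁻¹)) / (Nat.card ↥N : ℂ) from
      (Finset.sum_div _ _ _).symm]
    rw [Finset.sum_comm]
    rw [Finset.sum_congr rfl (fun x _ => hconj x), Finset.sum_const, Finset.card_univ,
      nsmul_eq_mul]
    field_simp
  -- conclude
  have hFSN : FSind ↥N θ = (∑ n : ↥N, θ (n ^ 2)) / (Nat.card ↥N : ℂ) := by
    unfold FSind
    rw [Nat.card_eq_fintype_card]
  rw [hFS, hFSN, hsplit, Gow]
  field_simp
  ring
end

section
/- Let N ⊴ G, let θ ∈ Irr(N) be non-real with G-orbit {θ, conj(θ)}, and set M := G_θ (the inertia group, of index 2 in G). Then ε(θ↑^G) = Σ ε_t(θ), where the sum runs over involutions t̄ of G/N lying outside M/N, t is a preimage of t̄, and ε_t(θ) is the Gow indicator. Moreover each such ε_t(θ) equals the Frobenius–Schur indicator of the irreducible character θ↑^{N⟨t⟩}. -/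
open scoped Classical

lemma idem_aux {m : Type*} [Fintype m] [DecidableEq m] (P : Matrix m m ℂ)
    (h : P * P = P) : (∃ r : ℕ, P.trace = r) ∧ (P.trace = 0 → P = 0) := by
  set f := Matrix.toLin' P with hf
  have hff : f ∘ₗ f = f := by rw [hf, ← Matrix.toLin'_mul, h]
  obtain ⟨p, hp⟩ := (LinearMap.isProj_iff_isIdempotentElem f).mpr hff
  have htr : LinearMap.trace ℂ _ f = (Module.finrank ℂ p : ℂ) := hp.trace
  have htrP : P.trace = LinearMap.trace ℂ _ f := by
    rw [LinearMap.trace_eq_matrix_trace ℂ (Pi.basisFun ℂ m) f,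
      LinearMap.toMatrix_eq_toMatrix', hf, LinearMap.toMatrix'_toLin']
  refine ⟨⟨_, htrP.trans htr⟩, fun h0 => ?_⟩
  have h1 : (Module.finrank ℂ p : ℂ) = 0 := by rw [← htr, ← htrP, h0]
  have h2 : Module.finrank ℂ p = 0 := by exact_mod_cast h1
  have h3 : p = ⊥ := Submodule.finrank_eq_zero.mp h2
  have hf0 : f = 0 := LinearMap.ext fun v => by
    have := hp.map_mem v
    rw [h3, Submodule.mem_bot] at this
    simpa using this
  have hP : P = LinearMap.toMatrix' f := by rw [hf, LinearMap.toMatrix'_toLin']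
  rw [hP, hf0, map_zero]

open Matrix Kronecker in
lemma sum_sq {G : Type*} [Group G] [Fintype G] (χ : G → ℂ) (hχ : IsIrrChar G χ)
    (hnr : (fun g => (starRingEnd ℂ) (χ g)) ≠ χ) : ∑ g : G, χ g * χ g = 0 := by
  obtain ⟨⟨d, ρ, hρ⟩, hnorm⟩ := hχ
  set M : G → Matrix (Fin d) (Fin d) ℂ := fun g => LinearMap.toMatrix' (ρ g) with hM
  have hMmul : ∀ a b : G, M (a * b) = M a * M b := by
    intro a b
    simp only [hM]
    rw [_root_.map_mul, LinearMap.toMatrix'_mul]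
  have htr : ∀ g, (M g).trace = χ g := by
    intro g
    rw [hρ, LinearMap.trace_eq_matrix_trace ℂ (Pi.basisFun ℂ (Fin d)),
      LinearMap.toMatrix_eq_toMatrix']
  set A : Matrix (Fin d × Fin d) (Fin d × Fin d) ℂ := ∑ g : G, M g ⊗ₖ M g with hA
  have hcard : (0:ℝ) < (Fintype.card G : ℝ) := by positivity
  have hc0 : (Fintype.card G : ℂ) ≠ 0 := Nat.cast_ne_zero.mpr Fintype.card_ne_zero
  have hAA : A * A = (Fintype.card G : ℂ) • A := by
    rw [hA, Finset.sum_mul_sum]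
    have h1 : ∀ a b : G, (M a ⊗ₖ M a) * (M b ⊗ₖ M b) = M (a*b) ⊗ₖ M (a*b) := by
      intro a b; rw [← Matrix.mul_kronecker_mul, ← hMmul]
    have h2 : ∀ a : G, ∑ b : G, M (a*b) ⊗ₖ M (a*b) = A := by
      intro a
      exact Fintype.sum_equiv (Equiv.mulLeft a) _ _ (fun b => rfl)
    simp_rw [h1, h2]
    rw [Finset.sum_const, Finset.card_univ, Nat.cast_smul_eq_nsmul]
  set P := ((Fintype.card G : ℂ))⁻¹ • A with hP
  have hPP : P * P = P := by
    rw [hP, Matrix.smul_mul, Matrix.mul_smul, hAA, smul_smul, smul_smul]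
    congr 1
    field_simp
  obtain ⟨⟨r, hr⟩, -⟩ := idem_aux P hPP
  have htrA : A.trace = ∑ g : G, χ g * χ g := by
    rw [hA, Matrix.trace_sum]
    exact Finset.sum_congr rfl fun g _ => by rw [Matrix.trace_kronecker, htr]
  have hS : ∑ g : G, χ g * χ g = (Fintype.card G : ℂ) * r := by
    have hPt : P.trace = ((Fintype.card G : ℂ))⁻¹ * A.trace := by
      rw [hP, Matrix.trace_smul, smul_eq_mul]
    have h4 : (r : ℂ) = (Fintype.card G : ℂ)⁻¹ * ∑ g : G, χ g * χ g := by
      rw [← htrA, ← hPt, hr]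
    rw [h4]; field_simp
  -- real part analysis
  have hnsq : ∑ g : G, Complex.normSq (χ g) = (Fintype.card G : ℝ) := by
    have : ((∑ g : G, Complex.normSq (χ g) : ℝ) : ℂ) = ((Fintype.card G : ℝ) : ℂ) := by
      push_cast
      rw [← hnorm]
      exact Finset.sum_congr rfl fun g _ => (Complex.mul_conj (χ g)).symm
    exact_mod_cast this
  have hre : ∑ g : G, (χ g * χ g).re = (Fintype.card G : ℝ) * r := by
    have := congrArg Complex.re hS
    simpa [Complex.re_sum] using this
  have hpt : ∀ g : G, (χ g * χ g).re ≤ Complex.normSq (χ g) := by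
    intro g
    rw [Complex.mul_re, Complex.normSq_apply]
    nlinarith [sq_nonneg (χ g).im]
  rcases Nat.eq_zero_or_pos r with h0 | h1
  · rw [hS, h0]; simp
  · exfalso
    have hle : (Fintype.card G : ℝ) * r ≤ (Fintype.card G : ℝ) := by
      rw [← hre, ← hnsq]
      exact Finset.sum_le_sum fun g _ => hpt g
    have hge : (Fintype.card G : ℝ) ≤ (Fintype.card G : ℝ) * r := by
      have : (1:ℝ) ≤ (r:ℝ) := by exact_mod_cast h1
      nlinarith
    have heq : ∑ g : G, (χ g * χ g).re = ∑ g : G, Complex.normSq (χ g) := by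
      rw [hre, hnsq]; linarith
    have hptEq : ∀ g ∈ Finset.univ, (χ g * χ g).re = Complex.normSq (χ g) :=
      (Finset.sum_eq_sum_iff_of_le fun g _ => hpt g).mp heq
    apply hnr
    funext g
    have h5 := hptEq g (Finset.mem_univ g)
    rw [Complex.mul_re, Complex.normSq_apply] at h5
    have him : (χ g).im = 0 := by nlinarith [sq_nonneg (χ g).im]
    exact Complex.conj_eq_iff_im.mpr him

section Helpers
variable {G : Type*} [Group G] [Fintype G]

lemma mem_fix (N : Subgroup G) (θ : ↥N → ℂ) (hθ : IsChar ↥N θ) {g : G} (hg : g ∈ N) :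
    conjChar N θ g = θ := by
  obtain ⟨d, ρ, hρ⟩ := hθ
  funext n
  have hmem : g * ↑n * g⁻¹ ∈ N := mul_mem (mul_mem hg n.2) (inv_mem hg)
  show ext0 N θ (g * ↑n * g⁻¹) = θ n
  rw [ext0, dif_pos hmem, hρ, hρ]
  have h1 : (⟨g * ↑n * g⁻¹, hmem⟩ : ↥N) = ⟨g, hg⟩ * (n * (⟨g, hg⟩)⁻¹) := by
    apply Subtype.ext; simp [mul_assoc]
  rw [h1, _root_.map_mul, LinearMap.trace_mul_comm, ← _root_.map_mul]
  congr 1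
  group

open Matrix Kronecker in
lemma gow_sum_zero (N : Subgroup G) [N.Normal] (θ : ↥N → ℂ) (hθ : IsIrrChar ↥N θ)
    (hnr : (fun n => (starRingEnd ℂ) (θ n)) ≠ θ)
    (t : G) (ht2 : t ^ 2 ∈ N) (hfix : conjChar N θ t = θ) :
    ∑ n : ↥N, ext0 N θ ((↑n * t) ^ 2) = 0 := by
  obtain ⟨d, ρ, hρ⟩ := hθ.1
  set M : ↥N → Matrix (Fin d) (Fin d) ℂ := fun n => LinearMap.toMatrix' (ρ n) with hM
  have hMmul : ∀ a b : ↥N, M (a * b) = M a * M b := by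
    intro a b
    simp only [hM]
    rw [_root_.map_mul, LinearMap.toMatrix'_mul]
  have htr : ∀ n, (M n).trace = θ n := by
    intro n
    rw [hρ, LinearMap.trace_eq_matrix_trace ℂ (Pi.basisFun ℂ (Fin d)),
      LinearMap.toMatrix_eq_toMatrix']
  have hmem : ∀ n : ↥N, t * ↑n * t⁻¹ ∈ N := fun n =>
    Subgroup.Normal.conj_mem ‹N.Normal› _ n.2 t
  set c : ↥N → ↥N := fun n => ⟨t * ↑n * t⁻¹, hmem n⟩ with hc
  have hcmul : ∀ a b : ↥N, c (a * b) = c a * c b := by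
    intro a b
    apply Subtype.ext
    show t * (↑a * ↑b) * t⁻¹ = (t * ↑a * t⁻¹) * (t * ↑b * t⁻¹)
    group
  have hχc : ∀ n, θ (c n) = θ n := by
    intro n
    have h5 := congrFun hfix n
    show θ ⟨t * ↑n * t⁻¹, hmem n⟩ = θ n
    rw [← h5]
    show _ = ext0 N θ (t * ↑n * t⁻¹)
    rw [ext0, dif_pos (hmem n)]
  have hc0 : (Fintype.card ↥N : ℂ) ≠ 0 := Nat.cast_ne_zero.mpr Fintype.card_ne_zero
  set B : Matrix (Fin d × Fin d) (Fin d × Fin d) ℂ := ∑ n : ↥N, M n ⊗ₖ M (c n) with hB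
  have hBB : B * B = (Fintype.card ↥N : ℂ) • B := by
    rw [hB, Finset.sum_mul_sum]
    have h1 : ∀ a b : ↥N, (M a ⊗ₖ M (c a)) * (M b ⊗ₖ M (c b)) = M (a*b) ⊗ₖ M (c (a*b)) := by
      intro a b; rw [← Matrix.mul_kronecker_mul, ← hMmul, ← hMmul, ← hcmul]
    have h2 : ∀ a : ↥N, ∑ b : ↥N, M (a*b) ⊗ₖ M (c (a*b)) = B := by
      intro a
      exact Fintype.sum_equiv (Equiv.mulLeft a) _ _ (fun b => rfl)
    simp_rw [h1, h2]
    rw [Finset.sum_const, Finset.card_univ, Nat.cast_smul_eq_nsmul]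
  set P := ((Fintype.card ↥N : ℂ))⁻¹ • B with hPdef
  have hPP : P * P = P := by
    rw [hPdef, Matrix.smul_mul, Matrix.mul_smul, hBB, smul_smul, smul_smul]
    congr 1
    field_simp
  obtain ⟨-, hz⟩ := idem_aux P hPP
  have htrB : B.trace = 0 := by
    rw [hB, Matrix.trace_sum]
    have : ∀ n : ↥N, (M n ⊗ₖ M (c n)).trace = θ n * θ n := by
      intro n; rw [Matrix.trace_kronecker, htr, htr, hχc]
    rw [Finset.sum_congr rfl fun n _ => this n]
    exact sum_sq θ hθ hnr
  have hP0 : P = 0 := by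
    apply hz
    rw [hPdef, Matrix.trace_smul, htrB, smul_zero]
  have hB0 : B = 0 := by
    have h6 : (Fintype.card ↥N : ℂ) • P = B := by
      rw [hPdef, smul_smul, mul_inv_cancel₀ hc0, one_smul]
    rw [← h6, hP0, smul_zero]
  have hBe : ∀ (i j k : Fin d), ∑ n : ↥N, M n i j * M (c n) j k = 0 := by
    intro i j k
    have h7 : B (i, j) (j, k) = 0 := by rw [hB0]; rfl
    rw [hB, Matrix.sum_apply] at h7
    simpa [Matrix.kroneckerMap_apply] using h7
  set tt : ↥N := ⟨t ^ 2, ht2⟩ with htt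
  have hx : ∀ n : ↥N, ((n * c n * tt : ↥N) : G) = (↑n * t) ^ 2 := by
    intro n
    show (↑n : G) * (t * ↑n * t⁻¹) * t ^ 2 = (↑n * t) ^ 2
    rw [sq, sq]
    group
  have key : ∀ n : ↥N, ext0 N θ ((↑n * t) ^ 2) = (M n * M (c n) * M tt).trace := by
    intro n
    rw [← hx n, ← hMmul, ← hMmul, htr]
    rw [ext0, dif_pos (SetLike.coe_mem _)]
  rw [Finset.sum_congr rfl fun n _ => key n]
  have step : ∀ (F : ↥N → Fin d → Fin d → Fin d → ℂ),
      ∑ n : ↥N, ∑ i, ∑ k, ∑ j, F n i k j = ∑ i, ∑ k, ∑ j, ∑ n : ↥N, F n i k j := by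
    intro F
    rw [Finset.sum_comm]
    exact Finset.sum_congr rfl fun i _ => by
      rw [Finset.sum_comm]
      exact Finset.sum_congr rfl fun k _ => Finset.sum_comm
  calc ∑ n : ↥N, (M n * M (c n) * M tt).trace
      = ∑ n : ↥N, ∑ i, ∑ k, ∑ j, M n i j * M (c n) j k * M tt k i := by
        refine Finset.sum_congr rfl fun n _ => ?_
        simp_rw [Matrix.trace, Matrix.diag, Matrix.mul_apply, Finset.sum_mul]
    _ = ∑ i, ∑ k, ∑ j, ∑ n : ↥N, M n i j * M (c n) j k * M tt k i := step _
    _ = 0 := by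
        simp_rw [← Finset.sum_mul, hBe]
        simp

end Helpers

section Main
variable {G : Type*} [Group G] [Fintype G]

lemma fs_ind (N : Subgroup G) (θ : ↥N → ℂ) :
    FSind G (Ind N θ) = (∑ h : G, ext0 N θ (h ^ 2)) / (Nat.card N : ℂ) := by
  have hcG : (Fintype.card G : ℂ) ≠ 0 := Nat.cast_ne_zero.mpr Fintype.card_ne_zero
  have h1 : ∀ x : G, ∑ g : G, ext0 N θ (x * g ^ 2 * x⁻¹) = ∑ h : G, ext0 N θ (h ^ 2) := by
    intro x
    refine Fintype.sum_equiv ((Equiv.mulLeft x).trans (Equiv.mulRight x⁻¹)) _ _ fun g => ?_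
    show ext0 N θ (x * g ^ 2 * x⁻¹) = ext0 N θ ((x * g * x⁻¹) ^ 2)
    congr 1
    rw [sq, sq]
    group
  have h2 : ∑ g : G, ∑ x : G, ext0 N θ (x * g ^ 2 * x⁻¹)
      = (Fintype.card G : ℂ) * ∑ h : G, ext0 N θ (h ^ 2) := by
    rw [Finset.sum_comm]
    simp_rw [h1]
    rw [Finset.sum_const, Finset.card_univ, nsmul_eq_mul]
  have hcN : (Nat.card ↥N : ℂ) ≠ 0 := Nat.cast_ne_zero.mpr Nat.card_pos.ne'
  show (∑ g : G, (∑ x : G, ext0 N θ (x * g ^ 2 * x⁻¹)) / (Nat.card N : ℂ))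
      / (Fintype.card G : ℂ) = _
  rw [← Finset.sum_div, h2]
  field_simp

lemma fs_indTo (N K : Subgroup G) (θ : ↥N → ℂ) :
    FSind ↥K (IndTo N K θ) = (∑ h : ↥K, ext0 N θ ((↑h : G) ^ 2)) / (Nat.card N : ℂ) := by
  have hcK : (Fintype.card ↥K : ℂ) ≠ 0 := Nat.cast_ne_zero.mpr Fintype.card_ne_zero
  have h1 : ∀ x : ↥K, ∑ g : ↥K, ext0 N θ (↑x * (↑g : G) ^ 2 * (↑x)⁻¹)
      = ∑ h : ↥K, ext0 N θ ((↑h : G) ^ 2) := by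
    intro x
    refine Fintype.sum_equiv ((Equiv.mulLeft x).trans (Equiv.mulRight x⁻¹)) _ _ fun g => ?_
    show ext0 N θ (↑x * (↑g : G) ^ 2 * (↑x)⁻¹) = ext0 N θ ((↑(x * g * x⁻¹) : G) ^ 2)
    congr 1
    push_cast
    rw [sq, sq]
    group
  have h2 : ∑ g : ↥K, ∑ x : ↥K, ext0 N θ (↑x * (↑g : G) ^ 2 * (↑x)⁻¹)
      = (Fintype.card ↥K : ℂ) * ∑ h : ↥K, ext0 N θ ((↑h : G) ^ 2) := by
    rw [Finset.sum_comm]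
    simp_rw [h1]
    rw [Finset.sum_const, Finset.card_univ, nsmul_eq_mul]
  have h3 : FSind ↥K (IndTo N K θ)
      = (∑ g : ↥K, (∑ x : ↥K, ext0 N θ (↑x * (↑g : G) ^ 2 * (↑x)⁻¹)) / (Nat.card N : ℂ))
        / (Fintype.card ↥K : ℂ) := by
    unfold FSind IndTo
    simp only [SubmonoidClass.coe_pow]
  have hcN : (Nat.card ↥N : ℂ) ≠ 0 := Nat.cast_ne_zero.mpr Nat.card_pos.ne'
  rw [h3, ← Finset.sum_div, h2]
  field_simp

end Main

open Pointwise in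
/-- for `θ` non-real with `G`-orbit `{θ, conj θ}` and `M = G_θ`,
`ε(θ↑G)` is the sum of the Gow indicators over involutions of `G/N` outside `M/N`;
moreover each such Gow indicator is the F-S indicator of the irreducible character
`θ↑^{N⟨t⟩}`. -/
theorem stmt13 {G : Type*} [Group G] [Fintype G] (N : Subgroup G) [N.Normal]
    (θ : ↥N → ℂ) (hθ : IsIrrChar ↥N θ)
    (hnr : (fun n => (starRingEnd ℂ) (θ n)) ≠ θ)
    (horb : ∀ g : G, conjChar N θ g = θ ∨ conjChar N θ g = fun n => (starRingEnd ℂ) (θ n))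
    (hex : ∃ g : G, conjChar N θ g = fun n => (starRingEnd ℂ) (θ n))
    (rep : G ⧸ N → G) (hrep : ∀ t : G ⧸ N, (QuotientGroup.mk (rep t) : G ⧸ N) = t) :
    (FSind G (Ind N θ) =
      ∑ t ∈ Finset.univ.filter
          (fun t : G ⧸ N => t ^ 2 = 1 ∧ conjChar N θ (rep t) ≠ θ), Gow N θ (rep t)) ∧
    ∀ t : G, t ^ 2 ∈ N → conjChar N θ t ≠ θ →
      Gow N θ t = FSind ↥(N ⊔ Subgroup.zpowers t) (IndTo N (N ⊔ Subgroup.zpowers t) θ) := by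
  have hcN : (Nat.card ↥N : ℂ) ≠ 0 := Nat.cast_ne_zero.mpr Nat.card_pos.ne'
  constructor
  · -- part 1
    have hsplit : ∑ h : G, ext0 N θ (h ^ 2)
        = ∑ q : G ⧸ N, ∑ n : ↥N, ext0 N θ ((↑n * rep q) ^ 2) := by
      have hbij : Function.Bijective (fun p : (G ⧸ N) × ↥N => (↑p.2 * rep p.1 : G)) := by
        rw [Fintype.bijective_iff_injective_and_card]
        constructor
        · rintro ⟨q1, n1⟩ ⟨q2, n2⟩ hpq
          simp only at hpq
          have hq : q1 = q2 := by
            have h1 : ((↑n1 * rep q1 : G) : G ⧸ N) = q1 := by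
              rw [QuotientGroup.mk_mul, (QuotientGroup.eq_one_iff _).mpr n1.2, one_mul, hrep]
            have h2 : ((↑n2 * rep q2 : G) : G ⧸ N) = q2 := by
              rw [QuotientGroup.mk_mul, (QuotientGroup.eq_one_iff _).mpr n2.2, one_mul, hrep]
            rw [← h1, ← h2, hpq]
          subst hq
          have hn : (n1 : G) = n2 := mul_right_cancel hpq
          exact Prod.ext rfl (Subtype.ext hn)
        · rw [Fintype.card_prod, ← Nat.card_eq_fintype_card, ← Nat.card_eq_fintype_card,
            ← Nat.card_eq_fintype_card, ← Subgroup.card_eq_card_quotient_mul_card_subgroup]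
      exact ((Fintype.sum_bijective _ hbij
        (fun p : (G ⧸ N) × ↥N => ext0 N θ ((↑p.2 * rep p.1) ^ 2))
        (fun h => ext0 N θ (h ^ 2)) fun p => rfl).symm).trans (Fintype.sum_prod_type _)
    rw [fs_ind, hsplit, Finset.sum_div]
    have hGow : ∑ q : G ⧸ N, (∑ n : ↥N, ext0 N θ ((↑n * rep q) ^ 2)) / (Nat.card ↥N : ℂ)
        = ∑ q : G ⧸ N, Gow N θ (rep q) := Finset.sum_congr rfl fun q _ => rfl
    rw [hGow, ← Finset.sum_filter_add_sum_filter_not Finset.univ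
      (fun q : G ⧸ N => q ^ 2 = 1 ∧ conjChar N θ (rep q) ≠ θ) (fun q => Gow N θ (rep q))]
    have hzero : ∑ q ∈ Finset.univ.filter
        (fun q : G ⧸ N => ¬(q ^ 2 = 1 ∧ conjChar N θ (rep q) ≠ θ)), Gow N θ (rep q) = 0 := by
      refine Finset.sum_eq_zero fun q hq => ?_
      rw [Finset.mem_filter] at hq
      by_cases h2 : q ^ 2 = 1
      · have hcc : conjChar N θ (rep q) = θ := by
          by_contra hc
          exact hq.2 ⟨h2, hc⟩
        have hmem : (rep q) ^ 2 ∈ N := by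
          rw [← QuotientGroup.eq_one_iff, QuotientGroup.mk_pow, hrep, h2]
        unfold Gow
        rw [gow_sum_zero N θ hθ hnr (rep q) hmem hcc, zero_div]
      · unfold Gow
        rw [Finset.sum_eq_zero, zero_div]
        intro n _
        rw [ext0, dif_neg]
        intro hmem
        apply h2
        have h3 := (QuotientGroup.eq_one_iff _).mpr hmem
        rw [QuotientGroup.mk_pow, QuotientGroup.mk_mul,
          (QuotientGroup.eq_one_iff _).mpr n.2, one_mul, hrep] at h3
        exact h3
    rw [hzero, add_zero]
  · -- part 2
    intro t ht2 hne
    have htN : t ∉ N := fun h => hne (mem_fix N θ hθ.1 h)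
    have hNH : ∀ n : ↥N, (↑n : G) ∈ N ⊔ Subgroup.zpowers t := fun n =>
      Subgroup.mem_sup_left n.2
    have htH : t ∈ N ⊔ Subgroup.zpowers t := Subgroup.mem_sup_right (Subgroup.mem_zpowers t)
    set e : ↥N ⊕ ↥N → ↥(N ⊔ Subgroup.zpowers t) := Sum.elim (fun n => ⟨↑n, hNH n⟩)
      (fun n => ⟨↑n * t, mul_mem (hNH n) htH⟩) with he
    have hebij : Function.Bijective e := by
      constructor
      · rintro (n1 | n1) (n2 | n2) h12 <;>
          have hv := congrArg Subtype.val h12 <;>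
          simp only [he, Sum.elim_inl, Sum.elim_inr] at hv
        · rw [Sum.inl.injEq]; exact Subtype.ext hv
        · exfalso
          apply htN
          have h4 : t = (↑n2)⁻¹ * ↑n1 := by rw [hv]; group
          rw [h4]; exact mul_mem (inv_mem n2.2) n1.2
        · exfalso
          apply htN
          have h4 : t = (↑n1)⁻¹ * ↑n2 := by rw [← hv]; group
          rw [h4]; exact mul_mem (inv_mem n1.2) n2.2
        · rw [Sum.inr.injEq]; exact Subtype.ext (mul_right_cancel hv)
      · rintro ⟨h, hh⟩
        have hh2 : h ∈ ((N : Set G) * (Subgroup.zpowers t : Set G)) := by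
          rw [← Subgroup.normal_mul]; exact hh
        obtain ⟨n, hn, z, hz, hprod⟩ := hh2
        rw [SetLike.mem_coe, Subgroup.mem_zpowers_iff] at hz
        obtain ⟨k, hk⟩ := hz
        rw [SetLike.mem_coe] at hn
        rcases Int.even_or_odd k with ⟨m, hm⟩ | ⟨m, hm⟩
        · have hzN : z ∈ N := by
            have h5 : t ^ k = (t ^ 2) ^ m := by
              rw [hm, ← zpow_natCast t 2, ← zpow_mul]
              norm_num
              ring_nf
            rw [← hk, h5]
            exact Subgroup.zpow_mem N ht2 m
          refine ⟨Sum.inl ⟨h, ?_⟩, Subtype.ext rfl⟩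
          rw [← hprod]
          exact mul_mem hn hzN
        · have hz2 : z = (t ^ 2) ^ m * t := by
            rw [← hk, hm, zpow_add, zpow_one, ← zpow_natCast t 2, ← zpow_mul]
            norm_num
          refine ⟨Sum.inr ⟨n * (t ^ 2) ^ m, mul_mem hn (Subgroup.zpow_mem N ht2 m)⟩, ?_⟩
          apply Subtype.ext
          show (n * (t ^ 2) ^ m) * t = h
          rw [← hprod, hz2, mul_assoc]
    have hsp := Fintype.sum_bijective e hebij
      (fun p => ext0 N θ ((↑(e p) : G) ^ 2))
      (fun h : ↥(N ⊔ Subgroup.zpowers t) => ext0 N θ ((↑h : G) ^ 2)) (fun p => rfl)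
    have hsplit2 : ∑ h : ↥(N ⊔ Subgroup.zpowers t), ext0 N θ ((↑h : G) ^ 2)
        = (∑ n : ↥N, ext0 N θ ((↑n : G) ^ 2)) + ∑ n : ↥N, ext0 N θ ((↑n * t) ^ 2) := by
      rw [← hsp, Fintype.sum_sum_type]
      simp only [he, Sum.elim_inl, Sum.elim_inr]
    have hfs0 : ∑ n : ↥N, ext0 N θ ((↑n : G) ^ 2) = 0 := by
      have h9 := gow_sum_zero N θ hθ hnr 1 (by rw [one_pow]; exact N.one_mem)
        (mem_fix N θ hθ.1 N.one_mem)
      simpa using h9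
    rw [fs_indTo, hsplit2, hfs0, zero_add]
    rfl
end
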